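/- Necessary condition for minimality (rank): let P ∈ ℝ^{k×k} have at most one nonzero entry, equal to ±1, in each row and each column, and suppose rank(P) < k. Then the pair W1 = P (I − ΛS⁻²)^{1/2} Uᵀ, W2 = U (I − ΛS⁻²)^{1/2} Pᵀ is not a local minimum of L: there exists a nonzero direction (δW1, δW2) such that the function h(t) = L(W1 + t·δW1, W2 + t·δW2) satisfies h'(0) = 0 and h''(0) < 0. -/

import Mathlib

open Matrix BigOperators

attribute [local instance] Matrix.frobeniusNormedAddCommGroup Matrix.frobeniusNormedSpace

/-- Squared Frobenius norm. -/
noncomputable def frobSq {a b : ℕ} (M : Matrix (Fin a) (Fin b) ℝ) : ℝ :=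
  ∑ i, ∑ j, (M i j) ^ 2

/-- The non-uniform ℓ2 regularized linear autoencoder loss. -/
noncomputable def LAEloss (m k n : ℕ) (X : Matrix (Fin m) (Fin n) ℝ) (lam : Fin k → ℝ)
    (p : Matrix (Fin k) (Fin m) ℝ × Matrix (Fin m) (Fin k) ℝ) : ℝ :=
  (1 / (n : ℝ)) * frobSq (X - p.2 * p.1 * X)
    + frobSq (Matrix.diagonal (fun i => Real.sqrt (lam i)) * p.1)
    + frobSq (p.2 * Matrix.diagonal (fun i => Real.sqrt (lam i)))

/-!
A signed partial permutation matrix `P` of rank `< k` has a zero row `i₀` and a zero column `j₀`.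
At points `(C Uᵀ, U Cᵀ)` the loss is `(1/n)‖X‖² + tr(S²(CᵀC)²) − 2 tr(S² CᵀC) + 2 tr(Λ C Cᵀ)`.
Moving `C₀ = P (I − ΛS⁻²)^{1/2}` along `E = E_{i₀j₀}` adds `t² E_{j₀j₀}` to `CᵀC` and `t² E_{i₀i₀}` to
`CCᵀ`, both orthogonal to the unperturbed products, so the loss along the line is the even quartic
`h(0) + 2 (λ_{i₀} − σ²_{j₀}) t² + σ²_{j₀} t⁴`, whose curvature at `0` is negative because
`λ_{i₀} ≤ λ_k < σ_k² ≤ σ²_{j₀}`.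
-/

theorem Matrix.transpose_mul_self_eq_diagonal {m n R : Type*} [Fintype m] [DecidableEq n]
    [Semiring R] {P : Matrix m n R} (hrow : ∀ i j j', P i j ≠ 0 → P i j' ≠ 0 → j = j') :
    Pᵀ * P = diagonal fun j => ∑ i, P i j ^ 2 := by
  ext j j'
  rw [mul_apply, diagonal_apply]
  split_ifs with h
  · simp [h, sq]
  · refine Finset.sum_eq_zero fun i _ => ?_
    by_contra hne
    exact h (hrow i j j' (left_ne_zero_of_mul hne) (right_ne_zero_of_mul hne))

theorem Matrix.exists_col_eq_zero_of_rank_lt {m n R : Type*} [Fintype m] [Fintype n]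
    [Field R] [LinearOrder R] [IsStrictOrderedRing R] {P : Matrix m n R}
    (hrow : ∀ i j j', P i j ≠ 0 → P i j' ≠ 0 → j = j') (hrank : P.rank < Fintype.card n) :
    ∃ j, ∀ i, P i j = 0 := by
  classical
  by_contra! hcol
  have hdiag : ∀ j, ∑ i, P i j ^ 2 ≠ 0 := fun j => by
    obtain ⟨i, hi⟩ := hcol j
    exact (Finset.sum_pos' (fun i _ => sq_nonneg _) ⟨i, Finset.mem_univ _, by positivity⟩).ne'
  have hrank' := rank_transpose_mul_self P
  rw [transpose_mul_self_eq_diagonal hrow, rank_diagonal] at hrank'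
  simp only [ne_eq, hdiag, not_false_eq_true, Fintype.card_subtype_true] at hrank'
  omega

theorem Matrix.mul_single_eq_zero_of_col_eq_zero {ι κ R : Type*} [Fintype ι] [DecidableEq ι]
    [Semiring R] {C : Matrix κ ι R} {j : ι} (hcol : ∀ a, C a j = 0) (b : ι) (c : R) :
    C * single j b c = 0 := by
  ext a b
  simp [mul_apply, single_apply, ite_and, hcol]

theorem Matrix.transpose_mul_self_add_of_transpose_mul_eq_zero {ι κ R : Type*} [Fintype κ]
    [CommSemiring R] {A B : Matrix κ ι R} (h : Aᵀ * B = 0) :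
    (A + B)ᵀ * (A + B) = Aᵀ * A + Bᵀ * B := by
  have h' : Bᵀ * A = 0 := by simpa [transpose_mul] using congrArg transpose h
  rw [transpose_add, Matrix.add_mul, Matrix.mul_add, Matrix.mul_add, h, h', add_zero, zero_add]

theorem Matrix.trace_diagonal_mul_single_same {ι R : Type*} [Fintype ι] [DecidableEq ι]
    [Semiring R] (d : ι → R) (j : ι) : trace (diagonal d * single j j 1) = d j := by
  simp [trace, diagonal_mul, single_apply]

section SingleEntryPerturbation

variable {ι : Type*} [Fintype ι] [DecidableEq ι]

noncomputable def reducedLoss (s lam : ι → ℝ) (C : Matrix ι ι ℝ) : ℝ :=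
  trace (diagonal s * (Cᵀ * C * (Cᵀ * C))) - 2 * trace (diagonal s * (Cᵀ * C))
    + 2 * trace (diagonal lam * (C * Cᵀ))

theorem reducedLoss_add_smul_single (s lam : ι → ℝ) {C : Matrix ι ι ℝ} {i j : ι}
    (hrow : ∀ b, C i b = 0) (hcol : ∀ a, C a j = 0) (t : ℝ) :
    reducedLoss s lam (C + t • single i j 1)
      = reducedLoss s lam C + 2 * (lam i - s j) * t ^ 2 + s j * t ^ 4 := by
  have hgram : (C + t • single i j 1)ᵀ * (C + t • single i j 1)
      = Cᵀ * C + (t ^ 2) • single j j 1 := by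
    rw [transpose_mul_self_add_of_transpose_mul_eq_zero]
    · simp [sq]
    · rw [Matrix.mul_smul, mul_single_eq_zero_of_col_eq_zero (C := Cᵀ) hrow, smul_zero]
  have hcogram : (C + t • single i j 1) * (C + t • single i j 1)ᵀ
      = C * Cᵀ + (t ^ 2) • single i i 1 := by
    have := transpose_mul_self_add_of_transpose_mul_eq_zero (A := Cᵀ)
      (B := t • (single i j (1 : ℝ))ᵀ) (by
        rw [transpose_transpose, Matrix.mul_smul, transpose_single,
          mul_single_eq_zero_of_col_eq_zero hcol, smul_zero])
    simpa [sq] using this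
  have hMF : Cᵀ * C * single j j 1 = 0 := by
    rw [Matrix.mul_assoc, mul_single_eq_zero_of_col_eq_zero hcol, Matrix.mul_zero]
  have hFM : single j j 1 * (Cᵀ * C) = 0 := by
    simpa [transpose_mul, Matrix.mul_assoc] using congrArg transpose hMF
  have hsq : (Cᵀ * C + (t ^ 2) • single j j 1) * (Cᵀ * C + (t ^ 2) • single j j 1)
      = Cᵀ * C * (Cᵀ * C) + (t ^ 4) • single j j 1 := by
    simp only [Matrix.add_mul, Matrix.mul_add, Matrix.smul_mul, Matrix.mul_smul, hMF, hFM,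
      smul_zero, add_zero, zero_add, single_mul_single_same, one_mul, smul_smul, ← pow_add]
  simp only [reducedLoss, hgram, hcogram, hsq, Matrix.mul_add, trace_add, Matrix.mul_smul,
    trace_smul, trace_diagonal_mul_single_same, smul_eq_mul]
  ring

end SingleEntryPerturbation

section LossOnColumnSpan

variable {m k n : ℕ} {X : Matrix (Fin m) (Fin n) ℝ} {U : Matrix (Fin m) (Fin k) ℝ}

theorem frobSq_eq_trace_mul_transpose {a b : ℕ} (M : Matrix (Fin a) (Fin b) ℝ) :
    frobSq M = trace (M * Mᵀ) := by
  simp only [frobSq, trace, diag, mul_apply, transpose_apply, sq]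

theorem frobSq_eq_trace_transpose_mul {a b : ℕ} (M : Matrix (Fin a) (Fin b) ℝ) :
    frobSq M = trace (Mᵀ * M) := by
  rw [frobSq_eq_trace_mul_transpose, trace_mul_comm]

theorem frobSq_transpose {a b : ℕ} (M : Matrix (Fin a) (Fin b) ℝ) : frobSq Mᵀ = frobSq M := by
  rw [frobSq_eq_trace_transpose_mul, frobSq_eq_trace_mul_transpose, transpose_transpose]

theorem frobSq_mul_of_transpose_mul_self_eq_one {a : ℕ} (hU : Uᵀ * U = 1)
    (B : Matrix (Fin k) (Fin a) ℝ) : frobSq (U * B) = frobSq B := by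
  rw [frobSq_eq_trace_transpose_mul, frobSq_eq_trace_transpose_mul, transpose_mul,
    Matrix.mul_assoc, ← Matrix.mul_assoc Uᵀ, hU, Matrix.one_mul]

theorem frobSq_mul_transpose_of_transpose_mul_self_eq_one {a : ℕ} (hU : Uᵀ * U = 1)
    (A : Matrix (Fin a) (Fin k) ℝ) : frobSq (A * Uᵀ) = frobSq A := by
  rw [← frobSq_transpose, transpose_mul, transpose_transpose,
    frobSq_mul_of_transpose_mul_self_eq_one hU, frobSq_transpose]

theorem frobSq_diagonal_sqrt_mul {a : ℕ} {lam : Fin k → ℝ} (hlam : ∀ i, 0 ≤ lam i)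
    (C : Matrix (Fin k) (Fin a) ℝ) :
    frobSq (diagonal (fun i => √(lam i)) * C) = trace (diagonal lam * (C * Cᵀ)) := by
  rw [frobSq_eq_trace_mul_transpose, transpose_mul, diagonal_transpose, ← Matrix.mul_assoc,
    trace_mul_comm, ← Matrix.mul_assoc, ← Matrix.mul_assoc, diagonal_mul_diagonal, Matrix.mul_assoc]
  simp_rw [Real.mul_self_sqrt (hlam _)]

theorem frobSq_sub_mul_self {N : Matrix (Fin m) (Fin m) ℝ} (hN : Nᵀ = N) :
    frobSq (X - N * X) = frobSq X - 2 * trace (N * (X * Xᵀ)) + trace (N * N * (X * Xᵀ)) := by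
  have h₁ : trace (X * Xᵀ * N) = trace (N * (X * Xᵀ)) := trace_mul_comm _ _
  have h₂ : trace (N * X * Xᵀ * N) = trace (N * N * (X * Xᵀ)) := by
    rw [trace_mul_comm]; simp only [Matrix.mul_assoc]
  simp only [frobSq_eq_trace_mul_transpose, transpose_sub, transpose_mul, hN, Matrix.sub_mul,
    Matrix.mul_sub, trace_sub, Matrix.mul_assoc] at h₁ h₂ ⊢
  linarith

theorem trace_mul_mul_transpose_mul_of_mul_eq {s : Fin k → ℝ} {S : Matrix (Fin m) (Fin m) ℝ}
    (hU : Uᵀ * U = 1) (hS : S * U = U * diagonal s) (A : Matrix (Fin k) (Fin k) ℝ) :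
    trace (U * A * Uᵀ * S) = trace (diagonal s * A) := by
  rw [trace_mul_comm, ← Matrix.mul_assoc, ← Matrix.mul_assoc, hS, Matrix.mul_assoc,
    trace_mul_comm, Matrix.mul_assoc, ← Matrix.mul_assoc Uᵀ, hU, Matrix.one_mul, trace_mul_comm]

theorem LAEloss_mul_transpose {lam s : Fin k → ℝ} (hlam : ∀ i, 0 ≤ lam i) (hU : Uᵀ * U = 1)
    (hS : ((1 / (n : ℝ)) • (X * Xᵀ)) * U = U * diagonal s) (C : Matrix (Fin k) (Fin k) ℝ) :
    LAEloss m k n X lam (C * Uᵀ, U * Cᵀ) = 1 / (n : ℝ) * frobSq X + reducedLoss s lam C := by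
  have hN : (U * (Cᵀ * C) * Uᵀ)ᵀ = U * (Cᵀ * C) * Uᵀ := by
    simp [transpose_mul, Matrix.mul_assoc]
  have hrec : U * Cᵀ * (C * Uᵀ) = U * (Cᵀ * C) * Uᵀ := by simp only [Matrix.mul_assoc]
  have hsq : U * (Cᵀ * C) * Uᵀ * (U * (Cᵀ * C) * Uᵀ) = U * (Cᵀ * C * (Cᵀ * C)) * Uᵀ := by
    simp only [Matrix.mul_assoc, ← Matrix.mul_assoc Uᵀ U, hU, Matrix.one_mul]
  have hcyc := fun A => trace_mul_mul_transpose_mul_of_mul_eq hU hS A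
  simp only [Matrix.mul_smul, trace_smul, smul_eq_mul] at hcyc
  have hreg₁ : frobSq (diagonal (fun i => √(lam i)) * (C * Uᵀ))
      = trace (diagonal lam * (C * Cᵀ)) := by
    rw [← Matrix.mul_assoc, frobSq_mul_transpose_of_transpose_mul_self_eq_one hU,
      frobSq_diagonal_sqrt_mul hlam]
  have hreg₂ : frobSq (U * Cᵀ * diagonal (fun i => √(lam i)))
      = trace (diagonal lam * (C * Cᵀ)) := by
    rw [Matrix.mul_assoc, frobSq_mul_of_transpose_mul_self_eq_one hU, ← frobSq_transpose,
      transpose_mul, transpose_transpose, diagonal_transpose, frobSq_diagonal_sqrt_mul hlam]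
  dsimp only [LAEloss]
  rw [hrec, frobSq_sub_mul_self hN, hsq, hreg₁, hreg₂, reducedLoss, ← hcyc, ← hcyc]
  ring

end LossOnColumnSpan

theorem deriv_even_quartic (a b c : ℝ) :
    deriv (fun t : ℝ => a + b * t ^ 2 + c * t ^ 4) = fun t => 2 * b * t + 4 * c * t ^ 3 := by
  funext t
  refine HasDerivAt.deriv ?_
  convert (((hasDerivAt_pow 2 t).const_mul b).const_add a).fun_add
    ((hasDerivAt_pow 4 t).const_mul c) using 1
  push_cast
  ring

theorem deriv_deriv_even_quartic_zero (a b c : ℝ) :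
    deriv (deriv fun t : ℝ => a + b * t ^ 2 + c * t ^ 4) 0 = 2 * b := by
  rw [deriv_even_quartic]
  refine HasDerivAt.deriv ?_
  convert ((hasDerivAt_id (0 : ℝ)).const_mul (2 * b)).fun_add
    ((hasDerivAt_pow 3 (0 : ℝ)).const_mul (4 * c)) using 1 <;> simp

/-- Necessary condition for minimality (rank): if `P` is a reduced-rank signed partial
permutation matrix (`rank P < k`), then `(P (I − ΛS⁻²)^{1/2} Uᵀ, U (I − ΛS⁻²)^{1/2} Pᵀ)`
is not a local minimum: there is a nonzero direction along which the first derivative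
vanishes and the second derivative is negative. -/
theorem reduced_rank_not_local_min (m k n : ℕ) (hk : 1 ≤ k)
    (X : Matrix (Fin m) (Fin n) ℝ) (lam : Fin k → ℝ)
    (hlam_pos : ∀ i, 0 < lam i) (hlam_mono : StrictMono lam)
    (sig2 : Fin k → ℝ) (hs_anti : StrictAnti sig2)
    (U : Matrix (Fin m) (Fin k) ℝ) (hUorth : Uᵀ * U = 1)
    (hUeig : ((1 / (n : ℝ)) • (X * Xᵀ)) * U = U * Matrix.diagonal sig2)
    (hlam_last : lam ⟨k - 1, by omega⟩ < sig2 ⟨k - 1, by omega⟩)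
    (P : Matrix (Fin k) (Fin k) ℝ)
    (hProw : ∀ i j j', P i j ≠ 0 → P i j' ≠ 0 → j = j')
    (hPcol : ∀ i i' j, P i j ≠ 0 → P i' j ≠ 0 → i = i')
    (hPrank : P.rank < k)
    (W1 : Matrix (Fin k) (Fin m) ℝ) (W2 : Matrix (Fin m) (Fin k) ℝ)
    (hW1 : W1 = P * Matrix.diagonal (fun i => Real.sqrt (1 - lam i / sig2 i)) * Uᵀ)
    (hW2 : W2 = U * Matrix.diagonal (fun i => Real.sqrt (1 - lam i / sig2 i)) * Pᵀ) :
    ∃ (d1 : Matrix (Fin k) (Fin m) ℝ) (d2 : Matrix (Fin m) (Fin k) ℝ),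
      (d1, d2) ≠ 0 ∧
      deriv (fun t : ℝ => LAEloss m k n X lam (W1 + t • d1, W2 + t • d2)) 0 = 0 ∧
      deriv (deriv (fun t : ℝ => LAEloss m k n X lam (W1 + t • d1, W2 + t • d2))) 0 < 0 := by
  obtain ⟨i₀, hrow⟩ : ∃ i, ∀ j, P i j = 0 :=
    Pᵀ.exists_col_eq_zero_of_rank_lt (fun j i i' => hPcol i i' j) (by simpa using hPrank)
  obtain ⟨j₀, hcol⟩ := P.exists_col_eq_zero_of_rank_lt hProw (by simpa using hPrank)
  set C₀ := P * diagonal fun i => √(1 - lam i / sig2 i)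
  set E : Matrix (Fin k) (Fin k) ℝ := single i₀ j₀ 1
  have hloss : (fun t : ℝ => LAEloss m k n X lam (W1 + t • (E * Uᵀ), W2 + t • (U * Eᵀ)))
      = fun t => (1 / (n : ℝ) * frobSq X + reducedLoss sig2 lam C₀)
          + 2 * (lam i₀ - sig2 j₀) * t ^ 2 + sig2 j₀ * t ^ 4 := by
    funext t
    have hW : (W1 + t • (E * Uᵀ), W2 + t • (U * Eᵀ))
        = ((C₀ + t • E) * Uᵀ, U * (C₀ + t • E)ᵀ) := by
      simp [hW1, hW2, C₀, Matrix.add_mul, Matrix.mul_add, transpose_mul, Matrix.mul_assoc]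
    rw [hW, LAEloss_mul_transpose (fun i => (hlam_pos i).le) hUorth hUeig,
      reducedLoss_add_smul_single sig2 lam (by simp [C₀, hrow]) (by simp [C₀, hcol])]
    ring
  have hlast : ∀ i : Fin k, i ≤ ⟨k - 1, by omega⟩ := fun i =>
    Fin.le_def.2 (Nat.le_sub_one_of_lt i.isLt)
  have hlt : lam i₀ < sig2 j₀ :=
    (hlam_mono.monotone (hlast i₀)).trans_lt (hlam_last.trans_le (hs_anti.antitone (hlast j₀)))
  have hdir : E * Uᵀ ≠ 0 := fun h => by
    have hE : E = 0 := by simpa [Matrix.mul_assoc, hUorth] using congrArg (· * U) h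
    simpa [E] using congrFun (congrFun hE i₀) j₀
  refine ⟨E * Uᵀ, U * Eᵀ, fun h => hdir (congrArg Prod.fst h), ?_, ?_⟩
  · rw [hloss, deriv_even_quartic]
    simp
  · rw [hloss, deriv_deriv_even_quartic_zero]
    linarith
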